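/- Let ψ : V → {1,2,3} be any map, let n_i = |ψ⁻¹(i)| for i ∈ {1,2,3}, and let t be a real number. Let S be the real matrix with rows indexed by V ⊔ {1,2,3} ⊔ {ε} and columns indexed by V, whose entries are S(u, v) = 1 if u = v and 0 otherwise (u, v ∈ V), S(i, v) = t³ if ψ(v) = i and 0 otherwise (i ∈ {1,2,3}), and S(ε, v) = 0. Then SᵀS is invertible, and I − S(SᵀS)⁻¹Sᵀ equals the matrix P (rows and columns indexed by V ⊔ {1,2,3} ⊔ {ε}) given by: P(u, v) = u_{ψ(u)} t⁶ if ψ(u) = ψ(v) and 0 otherwise (u, v ∈ V); P(v, i) = P(i, v) = −u_i t³ if ψ(v) = i and 0 otherwise (v ∈ V, i ∈ {1,2,3}); P(i, j) = u_i if i = j and 0 otherwise (i, j ∈ {1,2,3}); P(ε, ε) = 1; and all remaining entries in the row and column indexed by ε are 0; here u_i = 1/(1 + n_i t⁶). -/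

import Mathlib

/-!
Let `A` be the `{1,2,3} × V` incidence matrix of the fibres of `ψ`, so that `S` is the stack of
`1`, `t³ A` and `0`. Then `SᵀS = 1 + t⁶ AᵀA`, and `AAᵀ = diag nᵢ`, so `D := diag uᵢ` inverts
`1 + t⁶ AAᵀ`. The push-through identity `A (1 - t⁶ AᵀDA) = DA` shows that `1 - t⁶ AᵀDA` inverts
`SᵀS`, and with it the blocks of `1 - S (SᵀS)⁻¹ Sᵀ` collapse to `t⁶ AᵀDA`, `-t³ AᵀD`, `-t³ DA`,
`D` and `1`.
-/

open Matrix

section PushThrough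

variable {V K R : Type*} [Fintype V] [Fintype K] [DecidableEq K] [CommRing R]
  {A : Matrix K V R} {D : Matrix K K R} {s : R}

theorem one_sub_smul_mul_transpose_mul (hD : (1 + s ^ 2 • (A * Aᵀ)) * D = 1) :
    1 - s ^ 2 • (A * Aᵀ * D) = D := by
  rw [sub_eq_iff_eq_add, ← hD, add_mul, one_mul, smul_mul_assoc, add_comm]

theorem one_sub_smul_mul_mul_transpose (hD : (1 + s ^ 2 • (A * Aᵀ)) * D = 1) :
    1 - s ^ 2 • (D * (A * Aᵀ)) = D := by
  rw [sub_eq_iff_eq_add, ← mul_eq_one_comm.mp hD, mul_add, mul_one, mul_smul_comm, add_comm]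

variable [DecidableEq V]

theorem mul_one_sub_transpose_mul_mul (hD : (1 + s ^ 2 • (A * Aᵀ)) * D = 1) :
    A * (1 - s ^ 2 • (Aᵀ * D * A)) = D * A := calc
  _ = (1 - s ^ 2 • (A * Aᵀ * D)) * A := by
    simp only [Matrix.mul_sub, Matrix.sub_mul, Matrix.mul_one, Matrix.one_mul, Matrix.mul_smul,
      Matrix.smul_mul, Matrix.mul_assoc]
  _ = D * A := by rw [one_sub_smul_mul_transpose_mul hD]

theorem one_sub_transpose_mul_mul_mul_transpose (hD : (1 + s ^ 2 • (A * Aᵀ)) * D = 1) :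
    (1 - s ^ 2 • (Aᵀ * D * A)) * Aᵀ = Aᵀ * D := calc
  _ = Aᵀ * (1 - s ^ 2 • (D * (A * Aᵀ))) := by
    simp only [Matrix.mul_sub, Matrix.sub_mul, Matrix.mul_one, Matrix.one_mul, Matrix.mul_smul,
      Matrix.smul_mul, Matrix.mul_assoc]
  _ = Aᵀ * D := by rw [one_sub_smul_mul_mul_transpose hD]

theorem one_add_transpose_mul_self_mul (hD : (1 + s ^ 2 • (A * Aᵀ)) * D = 1) :
    (1 + s ^ 2 • (Aᵀ * A)) * (1 - s ^ 2 • (Aᵀ * D * A)) = 1 := by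
  rw [add_mul, one_mul, Matrix.smul_mul, Matrix.mul_assoc Aᵀ A,
    mul_one_sub_transpose_mul_mul hD, ← Matrix.mul_assoc, sub_add_cancel]

end PushThrough

section Stack

variable {V K R : Type*} [Fintype V] [DecidableEq V] [CommRing R] (E : Type*)

def oneStackSMul (A : Matrix K V R) (s : R) : Matrix (V ⊕ K ⊕ E) V R :=
  fromRows 1 (fromRows (s • A) 0)

variable {A : Matrix K V R} {s : R}

theorem transpose_oneStackSMul_mul_self [Fintype K] [Fintype E] :
    (oneStackSMul E A s)ᵀ * oneStackSMul E A s = 1 + s ^ 2 • (Aᵀ * A) := by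
  rw [oneStackSMul, transpose_fromRows, transpose_fromRows, fromCols_mul_fromRows,
    fromCols_mul_fromRows]
  simp [smul_smul, sq]

theorem one_sub_oneStackSMul_mul_mul_transpose [DecidableEq K] [DecidableEq E]
    (M : Matrix V V R) :
    1 - oneStackSMul E A s * M * (oneStackSMul E A s)ᵀ =
      fromBlocks (1 - M) (fromCols (-(s • (M * Aᵀ))) 0) (fromRows (-(s • (A * M))) 0)
        (fromBlocks (1 - s ^ 2 • (A * M * Aᵀ)) 0 0 1) := by
  simp only [oneStackSMul, transpose_fromRows, Matrix.mul_assoc, mul_fromCols, fromRows_mul,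
    fromCols_fromRows_eq_fromBlocks, ← fromBlocks_one]
  ext (i | i | i) (j | j | j) <;> simp [one_apply, sq, smul_smul]

variable [Fintype K] [DecidableEq K] [Fintype E] {D : Matrix K K R}

theorem transpose_oneStackSMul_mul_self_mul (hD : (1 + s ^ 2 • (A * Aᵀ)) * D = 1) :
    (oneStackSMul E A s)ᵀ * oneStackSMul E A s * (1 - s ^ 2 • (Aᵀ * D * A)) = 1 := by
  rw [transpose_oneStackSMul_mul_self, one_add_transpose_mul_self_mul hD]

theorem one_sub_oneStackSMul_mul_inv_mul_transpose [DecidableEq E]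
    (hD : (1 + s ^ 2 • (A * Aᵀ)) * D = 1) :
    1 - oneStackSMul E A s * ((oneStackSMul E A s)ᵀ * oneStackSMul E A s)⁻¹ *
        (oneStackSMul E A s)ᵀ =
      fromBlocks (s ^ 2 • (Aᵀ * D * A)) (fromCols (-(s • (Aᵀ * D))) 0)
        (fromRows (-(s • (D * A))) 0) (fromBlocks D 0 0 1) := by
  rw [inv_eq_right_inv (transpose_oneStackSMul_mul_self_mul E hD),
    one_sub_oneStackSMul_mul_mul_transpose, sub_sub_cancel,
    one_sub_transpose_mul_mul_mul_transpose hD, mul_one_sub_transpose_mul_mul hD,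
    Matrix.mul_assoc D A, one_sub_smul_mul_mul_transpose hD]

end Stack

section FiberIndicator

variable (R : Type*) {V K : Type*} [DecidableEq K] [CommRing R] (ψ : V → K)

def fiberIndicator : Matrix K V R := of fun k v => if ψ v = k then 1 else 0

@[simp]
theorem fiberIndicator_apply (k : K) (v : V) :
    fiberIndicator R ψ k v = if ψ v = k then 1 else 0 := rfl

theorem fiberIndicator_mul_transpose [Fintype V] :
    fiberIndicator R ψ * (fiberIndicator R ψ)ᵀ =
      diagonal fun k => ((Finset.univ.filter fun v => ψ v = k).card : R) := by
  ext k l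
  simp only [Matrix.mul_apply, transpose_apply, fiberIndicator_apply, ite_zero_mul_ite_zero,
    mul_one, Finset.sum_boole, diagonal_apply]
  split_ifs with hkl
  · simp [hkl]
  · rw [Finset.filter_false_of_mem fun v _ h => hkl (h.1.symm.trans h.2)]
    simp

theorem transpose_fiberIndicator_mul_diagonal_mul_apply [Fintype K] (d : K → R) (w v : V) :
    ((fiberIndicator R ψ)ᵀ * diagonal d * fiberIndicator R ψ) w v =
      if ψ w = ψ v then d (ψ w) else 0 := by
  by_cases h : ψ w = ψ v <;> simp [Matrix.mul_apply, diagonal_apply, h]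

end FiberIndicator

theorem projection_formula
    {V : Type*} [Fintype V] [DecidableEq V]
    (ψ : V → Fin 3) (t : ℝ)
    (nc : Fin 3 → ℕ) (hnc : ∀ i, nc i = (Finset.univ.filter fun v : V => ψ v = i).card)
    (u : Fin 3 → ℝ) (hu : ∀ i, u i = 1 / (1 + nc i * t ^ 6))
    (S : Matrix (V ⊕ Fin 3 ⊕ Unit) V ℝ)
    (hS : S = Matrix.of fun r (v : V) =>
      match r with
      | Sum.inl w => if w = v then (1 : ℝ) else 0
      | Sum.inr (Sum.inl i) => if ψ v = i then t ^ 3 else 0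
      | Sum.inr (Sum.inr _) => 0)
    (P : Matrix (V ⊕ Fin 3 ⊕ Unit) (V ⊕ Fin 3 ⊕ Unit) ℝ)
    (hP : P = Matrix.of fun r c =>
      match r, c with
      | Sum.inl w, Sum.inl v => if ψ w = ψ v then u (ψ w) * t ^ 6 else 0
      | Sum.inl v, Sum.inr (Sum.inl i) => if ψ v = i then -(u i * t ^ 3) else 0
      | Sum.inr (Sum.inl i), Sum.inl v => if ψ v = i then -(u i * t ^ 3) else 0
      | Sum.inr (Sum.inl i), Sum.inr (Sum.inl j) => if i = j then u i else 0
      | Sum.inr (Sum.inr _), Sum.inr (Sum.inr _) => (1 : ℝ)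
      | _, _ => 0) :
    IsUnit (Sᵀ * S) ∧ 1 - S * (Sᵀ * S)⁻¹ * Sᵀ = P := by
  have hS' : S = oneStackSMul Unit (fiberIndicator ℝ ψ) (t ^ 3) := by
    subst hS
    ext (w | i | e) v <;> simp [oneStackSMul, one_apply]
  have hD :
      (1 + (t ^ 3) ^ 2 • (fiberIndicator ℝ ψ * (fiberIndicator ℝ ψ)ᵀ)) * diagonal u = 1 := by
    rw [fiberIndicator_mul_transpose, ← diagonal_smul, ← diagonal_one, diagonal_add,
      diagonal_mul_diagonal]
    congr 1
    ext i
    have hpos : 0 < 1 + (nc i : ℝ) * t ^ 6 := by positivity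
    simp only [Pi.smul_apply, smul_eq_mul, hu, ← hnc, ← pow_mul]
    field_simp
    ring
  subst hS' hP
  refine ⟨.of_mul_eq_one _ (transpose_oneStackSMul_mul_self_mul Unit hD),
    (one_sub_oneStackSMul_mul_inv_mul_transpose Unit hD).trans ?_⟩
  ext (w | i | e) (v | j | f) <;>
    simp [transpose_fiberIndicator_mul_diagonal_mul_apply, diagonal_apply, neg_ite, ← pow_mul,
      mul_comm]
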